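/- For every α > 0, every integer n ≥ 0, and every real s > −1/2, the Laplace transform of the generalized Laguerre function satisfies ∫_0^∞ e^{−sx} φ_n^{(α)}(x) dx = (Γ(n+α+1)/Γ(n+1)) · (1/2 − s)^n / (s + 1/2)^{n+1+α}. -/

import Mathlib

/-!
On `(0, ∞)` the Rodrigues formula gives `e^{-sx} φ_n^{(α)}(x) = (-1)^n / n! · e^{cx} f^{(n)}(x)`
with `f(y) = y^{n+α} e^{-y}` and `c = 1/2 - s < 1`. By Leibniz, `f^{(k)}` is a combination of the
functions `x^{n+α-i} e^{-x}`, `i ≤ k`, so for `k < n + α` the boundary terms of an integration by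
parts against `e^{cx}` vanish at `0` and at `∞`. Integrating by parts `n` times leaves
`(-c)^n ∫ x^{n+α} e^{-(1-c)x} dx = (-c)^n Γ(n+α+1) / (1-c)^{n+α+1}`.
-/

open MeasureTheory Set

/-- The monic generalized Laguerre polynomial `L_n^{(α)}`, via the Rodrigues formula. -/
noncomputable def laguerreL (α : ℝ) (n : ℕ) (x : ℝ) : ℝ :=
  (-1 : ℝ) ^ n * Real.exp x * x ^ (-α) *
    iteratedDeriv n (fun y => y ^ ((n : ℝ) + α) * Real.exp (-y)) x

/-- The generalized Laguerre function `φ_n^{(α)}(x) = e^{-x/2} x^α L_n^{(α)}(x)/Γ(n+1)`. -/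
noncomputable def laguerrePhi (α : ℝ) (n : ℕ) (x : ℝ) : ℝ :=
  Real.exp (-x / 2) * x ^ α * laguerreL α n x / Real.Gamma ((n : ℝ) + 1)

open Real Filter Topology

theorem iteratedDeriv_rpow_mul_exp_neg (p : ℝ) (k : ℕ) {x : ℝ} (hx : 0 < x) :
    iteratedDeriv k (fun y => y ^ p * exp (-y)) x =
      ∑ i ∈ Finset.range (k + 1), k.choose i * (descPochhammer ℝ i).eval p * (-1) ^ (k - i) *
        (x ^ (p - i) * exp (-x)) := by
  have hexp : ∀ j, iteratedDeriv j (fun y => exp (-y)) x = (-1) ^ j * exp (-x) := fun j => by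
    simpa using congrFun (iteratedDeriv_exp_const_mul j (-1)) x
  rw [iteratedDeriv_fun_mul (contDiffAt_rpow_const_of_ne hx.ne') (by fun_prop)]
  refine Finset.sum_congr rfl fun i _ => ?_
  rw [hexp, iteratedDeriv_eq_iterate, iter_deriv_rpow_const]
  ring

theorem hasDerivAt_iteratedDeriv_rpow_mul_exp_neg (p : ℝ) (k : ℕ) {x : ℝ} (hx : 0 < x) :
    HasDerivAt (iteratedDeriv k (fun y => y ^ p * exp (-y)))
      (iteratedDeriv (k + 1) (fun y => y ^ p * exp (-y)) x) x := by
  have hcongr := eventuallyEq_of_mem (Ioi_mem_nhds hx)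
    fun y (hy : y ∈ Ioi 0) => iteratedDeriv_rpow_mul_exp_neg p k hy
  have hdiff : DifferentiableAt ℝ (iteratedDeriv k (fun y => y ^ p * exp (-y))) x :=
    hcongr.differentiableAt_iff.2 (by fun_prop (disch := exact hx.ne'))
  rw [iteratedDeriv_succ]
  exact hdiff.hasDerivAt

theorem integrableOn_rpow_mul_exp_neg_mul {q b : ℝ} (hq : -1 < q) (hb : 0 < b) :
    IntegrableOn (fun x : ℝ => x ^ q * exp (-b * x)) (Ioi 0) := by
  simpa using integrableOn_rpow_mul_exp_neg_mul_rpow hq one_pos hb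

theorem integral_exp_mul_rpow_mul_exp_neg {p c : ℝ} (hp : -1 < p) (hc : c < 1) :
    ∫ x in Ioi (0 : ℝ), exp (c * x) * (x ^ p * exp (-x)) = Gamma (p + 1) / (1 - c) ^ (p + 1) := by
  have hexp : ∀ x : ℝ,
      exp (c * x) * (x ^ p * exp (-x)) = x ^ (p + 1 - 1) * exp (-((1 - c) * x)) := fun x => by
    rw [add_sub_cancel_right, mul_left_comm, ← exp_add]
    ring_nf
  simp_rw [hexp]
  rw [integral_rpow_mul_exp_neg_mul_Ioi (by linarith) (by linarith), one_div,
    inv_rpow (by linarith), inv_mul_eq_div]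

section LaplaceTransform

variable {p c : ℝ}

theorem exp_mul_iteratedDeriv_rpow_mul_exp_neg (k : ℕ) {x : ℝ} (hx : 0 < x) :
    exp (c * x) * iteratedDeriv k (fun y => y ^ p * exp (-y)) x =
      ∑ i ∈ Finset.range (k + 1), k.choose i * (descPochhammer ℝ i).eval p * (-1) ^ (k - i) *
        (x ^ (p - i) * exp (-(1 - c) * x)) := by
  rw [iteratedDeriv_rpow_mul_exp_neg p k hx, Finset.mul_sum]
  refine Finset.sum_congr rfl fun i _ => ?_
  rw [show -(1 - c) * x = c * x + -x by ring, exp_add]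
  ring

theorem integrableOn_exp_mul_iteratedDeriv_rpow_mul_exp_neg (hc : c < 1) {k : ℕ}
    (hk : (k : ℝ) < p + 1) :
    IntegrableOn (fun x => exp (c * x) * iteratedDeriv k (fun y => y ^ p * exp (-y)) x)
      (Ioi 0) := by
  refine IntegrableOn.congr_fun ?_
    (fun x hx => (exp_mul_iteratedDeriv_rpow_mul_exp_neg k hx).symm) measurableSet_Ioi
  refine integrable_finsetSum _ fun i hi => Integrable.const_mul ?_ _
  have hi : (i : ℝ) ≤ k := mod_cast Finset.mem_range_succ_iff.1 hi
  exact integrableOn_rpow_mul_exp_neg_mul (by linarith) (by linarith)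

theorem tendsto_exp_mul_iteratedDeriv_rpow_mul_exp_neg_atTop (hc : c < 1) (k : ℕ) :
    Tendsto (fun x => exp (c * x) * iteratedDeriv k (fun y => y ^ p * exp (-y)) x)
      atTop (𝓝 0) := by
  refine Tendsto.congr' ((eventually_gt_atTop 0).mono
    fun x hx => (exp_mul_iteratedDeriv_rpow_mul_exp_neg k hx).symm) ?_
  simpa using tendsto_finsetSum (Finset.range (k + 1)) fun i _ =>
    (tendsto_rpow_mul_exp_neg_mul_atTop_nhds_zero (p - i) (1 - c) (by linarith)).const_mul
      (k.choose i * (descPochhammer ℝ i).eval p * (-1) ^ (k - i))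

theorem tendsto_exp_mul_iteratedDeriv_rpow_mul_exp_neg_nhdsGT_zero {k : ℕ} (hk : (k : ℝ) < p) :
    Tendsto (fun x => exp (c * x) * iteratedDeriv k (fun y => y ^ p * exp (-y)) x)
      (𝓝[>] 0) (𝓝 0) := by
  refine Tendsto.congr' (eventually_mem_nhdsWithin.mono
    fun x hx => (exp_mul_iteratedDeriv_rpow_mul_exp_neg k hx).symm) ?_
  refine tendsto_nhdsWithin_of_tendsto_nhds ?_
  have hterm : ∀ i ∈ Finset.range (k + 1),
      Tendsto (fun x : ℝ => x ^ (p - i) * exp (-(1 - c) * x)) (𝓝 0) (𝓝 0) := by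
    intro i hi
    have hi : (i : ℝ) < p := lt_of_le_of_lt (mod_cast Finset.mem_range_succ_iff.1 hi) hk
    have hcont : ContinuousAt (fun x : ℝ => x ^ (p - i) * exp (-(1 - c) * x)) 0 :=
      (continuousAt_rpow_const _ _ (Or.inr (by linarith))).mul (by fun_prop)
    simpa [zero_rpow (sub_pos.2 hi).ne'] using hcont.tendsto
  simpa using tendsto_finsetSum _ fun i hi => (hterm i hi).const_mul
    (k.choose i * (descPochhammer ℝ i).eval p * (-1) ^ (k - i))

theorem integral_exp_mul_iteratedDeriv_succ_rpow_mul_exp_neg (hc : c < 1) {k : ℕ}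
    (hk : (k : ℝ) < p) :
    ∫ x in Ioi (0 : ℝ), exp (c * x) * iteratedDeriv (k + 1) (fun y => y ^ p * exp (-y)) x =
      -c * ∫ x in Ioi (0 : ℝ), exp (c * x) * iteratedDeriv k (fun y => y ^ p * exp (-y)) x := by
  have hexp : ∀ x ∈ Ioi (0 : ℝ), HasDerivAt (fun x => exp (c * x)) (c * exp (c * x)) x :=
    fun x _ => by simpa [mul_comm] using ((hasDerivAt_id x).const_mul c).exp
  have hint := integrableOn_exp_mul_iteratedDeriv_rpow_mul_exp_neg hc (k := k) (by linarith)
  rw [integral_Ioi_mul_deriv_eq_deriv_mul hexp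
      (fun x hx => hasDerivAt_iteratedDeriv_rpow_mul_exp_neg p k hx)
      (integrableOn_exp_mul_iteratedDeriv_rpow_mul_exp_neg hc (by push_cast; linarith))
      (by simpa only [IntegrableOn, Pi.mul_def, mul_assoc] using hint.const_mul c)
      (tendsto_exp_mul_iteratedDeriv_rpow_mul_exp_neg_nhdsGT_zero hk)
      (tendsto_exp_mul_iteratedDeriv_rpow_mul_exp_neg_atTop hc k),
    ← integral_const_mul]
  simp only [mul_assoc, zero_sub, sub_zero, integral_neg, neg_mul]

theorem integral_exp_mul_iteratedDeriv_rpow_mul_exp_neg (hc : c < 1) {k : ℕ}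
    (hk : (k : ℝ) < p + 1) :
    ∫ x in Ioi (0 : ℝ), exp (c * x) * iteratedDeriv k (fun y => y ^ p * exp (-y)) x =
      (-c) ^ k * Gamma (p + 1) / (1 - c) ^ (p + 1) := by
  induction k with
  | zero => simpa using integral_exp_mul_rpow_mul_exp_neg (by simp at hk; linarith) hc
  | succ k ih =>
    push_cast at hk
    rw [integral_exp_mul_iteratedDeriv_succ_rpow_mul_exp_neg hc (by linarith), ih (by linarith)]
    ring

end LaplaceTransform

theorem exp_neg_mul_mul_laguerrePhi (α : ℝ) (n : ℕ) (s : ℝ) {x : ℝ} (hx : 0 < x) :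
    exp (-s * x) * laguerrePhi α n x = (-1) ^ n / Gamma (n + 1) *
      (exp ((1 / 2 - s) * x) * iteratedDeriv n (fun y => y ^ ((n : ℝ) + α) * exp (-y)) x) := by
  have hexp : exp ((1 / 2 - s) * x) = exp (-s * x) * exp (-x / 2) * exp x := by
    rw [← exp_add, ← exp_add]
    ring_nf
  have hxα : x ^ α ≠ 0 := (rpow_pos_of_pos hx α).ne'
  rw [laguerrePhi, laguerreL, rpow_neg hx.le, hexp]
  field_simp

/-- Laplace transform of the generalized Laguerre function. -/
theorem stmt_5 (α : ℝ) (hα : 0 < α) (n : ℕ) (s : ℝ) (hs : -1/2 < s) :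
    (∫ x in Ioi (0:ℝ), Real.exp (-s * x) * laguerrePhi α n x) =
      (Real.Gamma ((n : ℝ) + α + 1) / Real.Gamma ((n : ℝ) + 1)) *
        (1/2 - s) ^ n / (s + 1/2) ^ ((n : ℝ) + 1 + α) := by
  have hc : 1 / 2 - s < 1 := by linarith
  have hn : (n : ℝ) < n + α + 1 := by linarith
  rw [setIntegral_congr_fun measurableSet_Ioi fun x hx => exp_neg_mul_mul_laguerrePhi α n s hx,
    integral_const_mul, integral_exp_mul_iteratedDeriv_rpow_mul_exp_neg hc hn, show 1 - (1 / 2 - s) = s + 1 / 2 by ring,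
    show (n : ℝ) + 1 + α = n + α + 1 by ring]
  have hsign : (-1 : ℝ) ^ n * (-(1 / 2 - s)) ^ n = (1 / 2 - s) ^ n := by
    rw [← mul_pow]
    ring
  rw [← hsign]
  ring
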